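/- arXiv:1008.2688 — 6 statements merged into one kernel-verified Lean document; each statement's English description precedes it below -/
import Mathlib

section
/- Let f = (a,b,0,c) be a binary constraint with abc ≠ 0, and let u' = [1/a³, 1/c³] be the unary constraint with u'(0)=a⁻³, u'(1)=c⁻³. Define g(x₁,x₂) = f(x₂,x₁) · Σ_{y ∈ Bool} f(x₁,y)·u'(y)·f(y,x₂). Then g = (1,0,0,1) = EQ₂. -/
/-! Since `f(1,0) = 0`, the outer factor `f(x₂,x₁)` kills `g` below the diagonal, and the inner
sum vanishes above it (every path from `1` to `0` passes through the edge `1 → 0`). On the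
diagonal only `y = x₁` survives, leaving `f(x,x)³ · u'(x)`, which `u'` normalises to `1`. -/

theorem mul_sum_mul_mul_eq_ite_of_upper_triangular {R : Type*} [CommSemiring R]
    (f : Bool → Bool → R) (hf : f true false = 0) (u : Bool → R) (x₁ x₂ : Bool) :
    f x₂ x₁ * ∑ y : Bool, f x₁ y * u y * f y x₂ = if x₁ = x₂ then f x₁ x₁ ^ 3 * u x₁ else 0 := by
  cases x₁ <;> cases x₂ <;>
    simp only [Fintype.sum_bool, hf, mul_zero, zero_mul, add_zero, zero_add, reduceIte,
      Bool.true_eq_false, Bool.false_eq_true] <;> ring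

theorem stmt4_general (a b c : ℂ) (habc : a * b * c ≠ 0) (f : Bool → Bool → ℂ)
    (h00 : f false false = a)
    (h10 : f true false = 0) (h11 : f true true = c)
    (u' : Bool → ℂ) (hu0 : u' false = (a ^ 3)⁻¹) (hu1 : u' true = (c ^ 3)⁻¹)
    (g : Bool → Bool → ℂ)
    (hg : ∀ x₁ x₂, g x₁ x₂ = f x₂ x₁ * ∑ y : Bool, f x₁ y * u' y * f y x₂) :
    ∀ x₁ x₂, g x₁ x₂ = if x₁ = x₂ then 1 else 0 := by
  have ha : a ^ 3 ≠ 0 := pow_ne_zero 3 (left_ne_zero_of_mul (left_ne_zero_of_mul habc))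
  have hc : c ^ 3 ≠ 0 := pow_ne_zero 3 (right_ne_zero_of_mul habc)
  intro x₁ x₂
  rw [hg, mul_sum_mul_mul_eq_ite_of_upper_triangular f h10]
  split_ifs
  · cases x₁
    · rw [h00, hu0, mul_inv_cancel₀ ha]
    · rw [h11, hu1, mul_inv_cancel₀ hc]
  · rfl

/-- For `f = (a,b,0,c)` with `abc ≠ 0` and `u' = [1/a³, 1/c³]`, the constraint
`g(x₁,x₂) = f(x₂,x₁)·Σ_y f(x₁,y)·u'(y)·f(y,x₂)` equals `EQ₂`. -/
theorem stmt4 (a b c : ℂ) (habc : a * b * c ≠ 0) (f : Bool → Bool → ℂ)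
    (h00 : f false false = a) (h01 : f false true = b)
    (h10 : f true false = 0) (h11 : f true true = c)
    (u' : Bool → ℂ) (hu0 : u' false = (a ^ 3)⁻¹) (hu1 : u' true = (c ^ 3)⁻¹)
    (g : Bool → Bool → ℂ)
    (hg : ∀ x₁ x₂, g x₁ x₂ = f x₂ x₁ * ∑ y : Bool, f x₁ y * u' y * f y x₂) :
    ∀ x₁ x₂, g x₁ x₂ = if x₁ = x₂ then 1 else 0 :=
  stmt4_general a b c habc f h00 h10 h11 u' hu0 hu1 g hg
end

section
/- Let f₁ = (0,a,b,c) and f₂ = (a',b',c',0) be binary constraints with ab ≠ 0 and b'c' ≠ 0. Define g(x₁,x₂) = Σ_{y₁,y₂ ∈ Bool} f₁(x₁,y₁)·f₁(y₂,x₂)·f₂(y₁,x₂)·f₂(x₁,y₂). Then g = (a·b·b'·c', 0, 0, a·b·b'·c'), i.e., g = abb'c' · EQ₂. -/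
/-! The four factors form a 4-cycle `x₁ – y₁ – x₂ – y₂ – x₁`. Since `f₁` vanishes at `(0,0)` and
`f₂` at `(1,1)`, a nonzero term needs `y₁ = 1` if `x₁ = 0` and `y₂ = 0` if `x₁ = 1`. Off the
diagonal this puts `f₂(y₁,x₂)` or `f₁(y₂,x₂)` on a zero entry; on the diagonal exactly one term
survives, `f₁(0,1) f₁(1,0) f₂(0,1) f₂(1,0)`. -/

theorem Bool.sum_sum_four_cycle_eq_ite {R : Type*} [CommSemiring R] (f₁ f₂ : Bool → Bool → R)
    (h₁ : f₁ false false = 0) (h₂ : f₂ true true = 0) (x₁ x₂ : Bool) :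
    ∑ y₁ : Bool, ∑ y₂ : Bool, f₁ x₁ y₁ * f₁ y₂ x₂ * f₂ y₁ x₂ * f₂ x₁ y₂ =
      f₁ false true * f₁ true false * f₂ false true * f₂ true false *
        if x₁ = x₂ then 1 else 0 := by
  cases x₁ <;> cases x₂ <;>
    simp only [Fintype.sum_bool, h₁, h₂, Bool.false_eq_true, Bool.true_eq_false, reduceIte] <;>
    ring

theorem stmt6_general (a b b' c' : ℂ)
    (f₁ f₂ : Bool → Bool → ℂ)
    (h100 : f₁ false false = 0) (h101 : f₁ false true = a)
    (h110 : f₁ true false = b)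
    (h201 : f₂ false true = b')
    (h210 : f₂ true false = c') (h211 : f₂ true true = 0)
    (g : Bool → Bool → ℂ)
    (hg : ∀ x₁ x₂, g x₁ x₂ = ∑ y₁ : Bool, ∑ y₂ : Bool,
      f₁ x₁ y₁ * f₁ y₂ x₂ * f₂ y₁ x₂ * f₂ x₁ y₂) :
    ∀ x₁ x₂, g x₁ x₂ = a * b * b' * c' * (if x₁ = x₂ then 1 else 0) := by
  intro x₁ x₂
  rw [hg, Bool.sum_sum_four_cycle_eq_ite f₁ f₂ h100 h211, h101, h110, h201, h210]

/-- For `f₁ = (0,a,b,c)` with `ab ≠ 0` and `f₂ = (a',b',c',0)` with `b'c' ≠ 0`,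
the constraint `g(x₁,x₂) = Σ_{y₁,y₂} f₁(x₁,y₁)·f₁(y₂,x₂)·f₂(y₁,x₂)·f₂(x₁,y₂)`
equals `abb'c' · EQ₂`. -/
theorem stmt6 (a b c a' b' c' : ℂ) (hab : a * b ≠ 0) (hbc : b' * c' ≠ 0)
    (f₁ f₂ : Bool → Bool → ℂ)
    (h100 : f₁ false false = 0) (h101 : f₁ false true = a)
    (h110 : f₁ true false = b) (h111 : f₁ true true = c)
    (h200 : f₂ false false = a') (h201 : f₂ false true = b')
    (h210 : f₂ true false = c') (h211 : f₂ true true = 0)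
    (g : Bool → Bool → ℂ)
    (hg : ∀ x₁ x₂, g x₁ x₂ = ∑ y₁ : Bool, ∑ y₂ : Bool,
      f₁ x₁ y₁ * f₁ y₂ x₂ * f₂ y₁ x₂ * f₂ x₁ y₂) :
    ∀ x₁ x₂, g x₁ x₂ = a * b * b' * c' * (if x₁ = x₂ then 1 else 0) :=
  stmt6_general a b b' c' f₁ f₂ h100 h101 h110 h201 h210 h211 g hg
end

section
/- Let f = (0,a,b,1) be a binary constraint with ab ≠ 0, and let u = [1, −ab] be the unary constraint with u(0)=1, u(1)=−ab. Define g(x₁,x₂) = Σ_{y ∈ Bool} f(x₁,y)·u(y)·f(y,x₂). Then g = (−(ab)², −a²b, −ab², 0). In particular, g(1,1) = 0 and the other three values of g are nonzero, so the underlying relation of g is NAND₂. -/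
/-- For `f = (0,a,b,1)` with `ab ≠ 0` and `u = [1,−ab]`, the constraint
`g(x₁,x₂) = Σ_y f(x₁,y)·u(y)·f(y,x₂)` equals `(−(ab)², −a²b, −ab², 0)`;
its underlying relation is `NAND₂`. -/
theorem stmt7 (a b : ℂ) (hab : a * b ≠ 0) (f : Bool → Bool → ℂ)
    (h00 : f false false = 0) (h01 : f false true = a)
    (h10 : f true false = b) (h11 : f true true = 1)
    (u : Bool → ℂ) (hu0 : u false = 1) (hu1 : u true = -(a * b))
    (g : Bool → Bool → ℂ)
    (hg : ∀ x₁ x₂, g x₁ x₂ = ∑ y : Bool, f x₁ y * u y * f y x₂) :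
    g false false = -(a * b) ^ 2 ∧ g false true = -(a ^ 2 * b) ∧
    g true false = -(a * b ^ 2) ∧ g true true = 0 ∧
    g false false ≠ 0 ∧ g false true ≠ 0 ∧ g true false ≠ 0 := by
  have hg' : ∀ x₁ x₂, g x₁ x₂ = f x₁ false * f false x₂ - a * b * (f x₁ true * f true x₂) := by
    intro x₁ x₂
    rw [hg, Fintype.sum_bool, hu0, hu1]
    ring
  have hFF : g false false = -(a * b) ^ 2 := by rw [hg', h00, h01, h10]; ring
  have hFT : g false true = -(a ^ 2 * b) := by rw [hg', h00, h01, h11]; ring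
  have hTF : g true false = -(a * b ^ 2) := by rw [hg', h00, h10, h11]; ring
  have hTT : g true true = 0 := by rw [hg', h01, h10, h11]; ring
  have ha : a ≠ 0 := left_ne_zero_of_mul hab
  have hb : b ≠ 0 := right_ne_zero_of_mul hab
  refine ⟨hFF, hFT, hTF, hTT, ?_, ?_, ?_⟩
  · rw [hFF]; exact neg_ne_zero.mpr (pow_ne_zero 2 hab)
  · rw [hFT]; exact neg_ne_zero.mpr (mul_ne_zero (pow_ne_zero 2 ha) hb)
  · rw [hTF]; exact neg_ne_zero.mpr (mul_ne_zero ha (pow_ne_zero 2 hb))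
end

section
/- Let f = (1,a,b,c) with abc ≠ 0, let d ≥ 2, and let u₁ = [1,−1/c]. Define g(x₁,…,x_d) = Σ_{y₁,…,y_{d-1} ∈ Bool} Π_{i=1}^{d-1} f(x_i,y_i)·u₁(y_i)·f(y_i,x_{i+1}). If ab ≠ c, then g has the form (α, 0, …, 0, β) with α, β ∈ ℂ both nonzero, i.e., g vanishes on every Boolean input except the all-0 and all-1 inputs, where it takes nonzero values α = (1 − ab/c)^{d-1} and β = (ab − c)^{d-1}. -/
/-! Summing out each edge variable `yᵢ` contracts `f · diag(u₁) · f` to the 2 × 2 matrix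
`diag(1 - ab/c, ab - c)`: the weight `u₁(1) = -1/c` is chosen exactly to cancel the off-diagonal
entries. Hence `g x` is a product of diagonal entries along the path `x₁, …, x_d`, which vanishes
as soon as two consecutive inputs differ, and is a `(d-1)`-st power on constant inputs. -/

theorem Fin.apply_eq_apply_of_forall_castSucc_eq_succ {α : Type*} {n : ℕ} {x : Fin (n + 1) → α}
    (h : ∀ k : Fin n, x k.castSucc = x k.succ) (i j : Fin (n + 1)) : x i = x j := by
  have hzero : ∀ i : Fin (n + 1), x i = x 0 := by
    intro i
    induction i using Fin.induction with
    | zero => rfl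
    | succ k ih => rw [← h k, ih]
  rw [hzero i, hzero j]

theorem Fin.prod_castSucc_succ_eq_zero_of_ne {α M : Type*} [CommMonoidWithZero M] [Nontrivial M]
    [NoZeroDivisors M] {K : α → α → M} (hK : ∀ p q, p ≠ q → K p q = 0) {n : ℕ}
    {x : Fin (n + 1) → α} (hx : ∃ i j, x i ≠ x j) :
    ∏ k : Fin n, K (x k.castSucc) (x k.succ) = 0 := by
  obtain ⟨i, j, hij⟩ := hx
  by_contra hne
  have hadj : ∀ k : Fin n, x k.castSucc = x k.succ := fun k => by
    by_contra hk
    exact Finset.prod_ne_zero_iff.1 hne k (Finset.mem_univ k) (hK _ _ hk)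
  exact hij (Fin.apply_eq_apply_of_forall_castSucc_eq_succ hadj i j)

/-- For `f = (1,a,b,c)` with `abc ≠ 0`, `u₁ = [1,−1/c]`, `d = n+2 ≥ 2`, and
`g(x₁,…,x_d) = Σ_{y₁,…,y_{d-1}} Π_i f(x_i,y_i)·u₁(y_i)·f(y_i,x_{i+1})`:
if `ab ≠ c` then `g` vanishes off the all-`0` and all-`1` inputs and takes
the nonzero values `(1 − ab/c)^{d-1}` and `(ab − c)^{d-1}` there. -/
theorem stmt12 (a b c : ℂ) (habc : a * b * c ≠ 0) (f : Bool → Bool → ℂ)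
    (h00 : f false false = 1) (h01 : f false true = a)
    (h10 : f true false = b) (h11 : f true true = c)
    (u₁ : Bool → ℂ) (hu0 : u₁ false = 1) (hu1 : u₁ true = -1 / c)
    (n : ℕ) (g : (Fin (n + 2) → Bool) → ℂ)
    (hg : ∀ x, g x = ∑ y : Fin (n + 1) → Bool,
      ∏ i : Fin (n + 1), f (x i.castSucc) (y i) * u₁ (y i) * f (y i) (x i.succ))
    (hab : a * b ≠ c) :
    (∀ x : Fin (n + 2) → Bool, (∃ i j, x i ≠ x j) → g x = 0) ∧
    g (fun _ => false) = (1 - a * b / c) ^ (n + 1) ∧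
    g (fun _ => true) = (a * b - c) ^ (n + 1) ∧
    (1 - a * b / c) ^ (n + 1) ≠ 0 ∧ (a * b - c) ^ (n + 1) ≠ 0 := by
  have hc : c ≠ 0 := right_ne_zero_of_mul habc
  set K : Bool → Bool → ℂ := fun p q => ∑ t, f p t * u₁ t * f t q with hK
  have hg_path : ∀ x, g x = ∏ i : Fin (n + 1), K (x i.castSucc) (x i.succ) := fun x => by
    rw [hg, Fintype.prod_sum (κ := fun _ => Bool)]
  have hK_offDiag : ∀ p q, p ≠ q → K p q = 0 := by
    rintro (_ | _) (_ | _) hpq <;> simp only [ne_eq, not_true_eq_false] at hpq <;>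
      simp only [hK, Fintype.sum_bool, h00, h01, h10, h11, hu0, hu1] <;> field_simp <;> ring
  have hK_false : K false false = 1 - a * b / c := by
    simp only [hK, Fintype.sum_bool, h00, h01, h10, hu0, hu1]; ring
  have hK_true : K true true = a * b - c := by
    simp only [hK, Fintype.sum_bool, h01, h10, h11, hu0, hu1]; field_simp; ring
  have hα : 1 - a * b / c ≠ 0 :=
    sub_ne_zero.2 fun h => hab ((div_eq_one_iff_eq hc).1 h.symm)
  refine ⟨fun x hx => ?_, ?_, ?_, pow_ne_zero _ hα, pow_ne_zero _ (sub_ne_zero.2 hab)⟩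
  · rw [hg_path]
    exact Fin.prod_castSucc_succ_eq_zero_of_ne hK_offDiag hx
  · simp [hg_path, hK_false]
  · simp [hg_path, hK_true]
end

section
/- Let f = (a,b,0,c) with abc ≠ 0, let d ≥ 3. Set u = [1/a², 1/c²] and u' = [1/a³, 1/c³], and define h(x₁,…,x_d) = f(x_d,x₁) · Σ_{y₁,…,y_{d-1} ∈ Bool} Π_{i=1}^{d-1} f(x_i,y_i)·u_i(y_i)·f(y_i,x_{i+1}), where u_{d-1} = u' and u_i = u for i < d−1. Then h = EQ_d, i.e., h(x₁,…,x_d) = 1 if all x_i agree and 0 otherwise. -/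
/-!
Expanding the product of sums, `h x` is the cyclic product of the factors
`g_w(x_i, x_{i+1}) = Σ_y f(x_i,y) w(y) f(y,x_{i+1})` (with `w = u` or `u'`) closed up by
`f(x_d, x_1)`. Since `f(1,0) = 0`, a factor vanishes at every cyclic descent `1 → 0`, and a
non-constant cyclic Boolean sequence has one. On a constant sequence `v` each factor is
`f(v,v)² w(v)`, which is `1` for `w = u` and `f(v,v)⁻¹` for `w = u'`.
-/

open Finset

lemma Fin.eq_zero_of_le_succ_of_last_le {α : Type*} [PartialOrder α] {m : ℕ}
    {x : Fin (m + 1) → α} (hsucc : ∀ i : Fin m, x i.castSucc ≤ x i.succ)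
    (hlast : x (Fin.last m) ≤ x 0) (i : Fin (m + 1)) : x i = x 0 :=
  have hmono : Monotone x := Fin.monotone_iff_le_succ.2 hsucc
  le_antisymm ((hmono (Fin.le_last i)).trans hlast) (hmono (Fin.zero_le i))

lemma Fin.exists_cyclic_descent_of_ne {m : ℕ} {x : Fin (m + 1) → Bool}
    (hx : ¬ ∀ i, x i = x 0) :
    (∃ i : Fin m, x i.castSucc = true ∧ x i.succ = false) ∨
      (x (Fin.last m) = true ∧ x 0 = false) := by
  have not_le_iff : ∀ {p q : Bool}, ¬ p ≤ q ↔ p = true ∧ q = false := by decide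
  by_contra! hno
  refine hx (Fin.eq_zero_of_le_succ_of_last_le (fun i => ?_) ?_)
  · by_contra hi
    exact hno.1 i (not_le_iff.1 hi).1 (not_le_iff.1 hi).2
  · by_contra hi
    exact hno.2 (not_le_iff.1 hi).1 (not_le_iff.1 hi).2

lemma Fin.prod_ite_val_eq_last {M : Type*} [CommMonoid M] (m : ℕ) (p q : M) :
    ∏ i : Fin (m + 1), (if (i : ℕ) = m then q else p) = p ^ m * q := by
  simp [Fin.prod_univ_castSucc, Fin.val_castSucc, (Fin.is_lt _).ne]

section UpperTriangular

variable {R : Type*} [CommSemiring R] {f : Bool → Bool → R}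

lemma sum_mul_mul_true_false_eq_zero (h10 : f true false = 0) (w : Bool → R) :
    ∑ y, f true y * w y * f y false = 0 := by
  simp [h10]

lemma sum_mul_mul_self_eq (h10 : f true false = 0) (w : Bool → R) (v : Bool) :
    ∑ y, f v y * w y * f y v = f v v ^ 2 * w v := by
  cases v <;> simp [h10] <;> ring

end UpperTriangular

theorem stmt13_general (a b c : ℂ) (habc : a * b * c ≠ 0) (f : Bool → Bool → ℂ)
    (h00 : f false false = a)
    (h10 : f true false = 0) (h11 : f true true = c)
    (u u' : Bool → ℂ)
    (hu0 : u false = (a ^ 2)⁻¹) (hu1 : u true = (c ^ 2)⁻¹)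
    (hu'0 : u' false = (a ^ 3)⁻¹) (hu'1 : u' true = (c ^ 3)⁻¹)
    (n : ℕ) (h : (Fin (n + 3) → Bool) → ℂ)
    (hh : ∀ x, h x = f (x (Fin.last (n + 2))) (x 0) *
      ∑ y : Fin (n + 2) → Bool, ∏ i : Fin (n + 2),
        f (x i.castSucc) (y i) *
        (if (i : ℕ) = n + 1 then u' (y i) else u (y i)) *
        f (y i) (x i.succ)) :
    ∀ x, h x = if (∀ i, x i = x 0) then 1 else 0 := by
  have ha : a ≠ 0 := left_ne_zero_of_mul (left_ne_zero_of_mul habc)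
  have hc : c ≠ 0 := right_ne_zero_of_mul habc
  have hdiag : ∀ v, f v v ^ 2 * u v = 1 ∧ f v v * (f v v ^ 2 * u' v) = 1 := by
    rintro (_ | _) <;> simp only [h00, h11, hu0, hu1, hu'0, hu'1] <;>
      exact ⟨by field_simp, by field_simp⟩
  intro x
  rw [hh, ← Fintype.prod_sum fun (i : Fin (n + 2)) (y : Bool) =>
    f (x i.castSucc) y * (if (i : ℕ) = n + 1 then u' y else u y) * f y (x i.succ)]
  split_ifs with hconst
  · generalize x 0 = v at hconst
    simp only [hconst, sum_mul_mul_self_eq h10]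
    simp only [mul_ite]
    rw [Fin.prod_ite_val_eq_last, (hdiag v).1, one_pow, one_mul, (hdiag v).2]
  · rcases Fin.exists_cyclic_descent_of_ne hconst with ⟨i, hi_true, hi_false⟩ | ⟨hlast, h0⟩
    · refine mul_eq_zero_of_right _ (prod_eq_zero (mem_univ i) ?_)
      rw [hi_true, hi_false, sum_mul_mul_true_false_eq_zero h10]
    · rw [hlast, h0, h10, zero_mul]

/-- For `f = (a,b,0,c)` with `abc ≠ 0`, `d = n+3 ≥ 3`, `u = [1/a²,1/c²]`,
`u' = [1/a³,1/c³]`, and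
`h(x₁,…,x_d) = f(x_d,x₁)·Σ_{y₁,…,y_{d-1}} Π_{i=1}^{d-1} f(x_i,y_i)·u_i(y_i)·f(y_i,x_{i+1})`
with `u_{d-1} = u'` and `u_i = u` for `i < d−1`, we have `h = EQ_d`. -/
theorem stmt13 (a b c : ℂ) (habc : a * b * c ≠ 0) (f : Bool → Bool → ℂ)
    (h00 : f false false = a) (h01 : f false true = b)
    (h10 : f true false = 0) (h11 : f true true = c)
    (u u' : Bool → ℂ)
    (hu0 : u false = (a ^ 2)⁻¹) (hu1 : u true = (c ^ 2)⁻¹)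
    (hu'0 : u' false = (a ^ 3)⁻¹) (hu'1 : u' true = (c ^ 3)⁻¹)
    (n : ℕ) (h : (Fin (n + 3) → Bool) → ℂ)
    (hh : ∀ x, h x = f (x (Fin.last (n + 2))) (x 0) *
      ∑ y : Fin (n + 2) → Bool, ∏ i : Fin (n + 2),
        f (x i.castSucc) (y i) *
        (if (i : ℕ) = n + 1 then u' (y i) else u (y i)) *
        f (y i) (x i.succ)) :
    ∀ x, h x = if (∀ i, x i = x 0) then 1 else 0 :=
  stmt13_general a b c habc f h00 h10 h11 u u' hu0 hu1 hu'0 hu'1 n h hh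
end

section
/- Let L₁ and L₂ be two or-distinctive factor lists (over variables x₁,…,x_k, with factors of the forms Δ₀, Δ₁, and OR_d, d ≥ 2) defining the same nonempty relation R ⊆ Bool^k. Then every factor of the form Δ_c (c ∈ {0,1}) appearing in L₁ also appears in L₂. -/
/-- A factor over variables `x₁,…,x_k`: either `Δ_c(x_i)` (`delta c i`) or an
`OR` over a (repeat-free) set of variables (`orf s`). -/
inductive BFactor (k : ℕ) where
  | delta : Bool → Fin k → BFactor k
  | orf : Finset (Fin k) → BFactor k
  deriving DecidableEq

/-- Evaluation of a factor. -/
def BFactor.eval {k : ℕ} : BFactor k → (Fin k → Bool) → Prop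
  | .delta c i, x => x i = c
  | .orf s, x => ∃ i ∈ s, x i = true

/-- The relation defined by a factor list: the pointwise conjunction. -/
def holdsList {k : ℕ} (L : Finset (BFactor k)) (x : Fin k → Bool) : Prop :=
  ∀ p ∈ L, p.eval x

/-- An or-distinctive factor list. -/
def OrDistinctive {k : ℕ} (L : Finset (BFactor k)) : Prop :=
  (∀ (c : Bool) (i : Fin k) (s : Finset (Fin k)),
      BFactor.delta c i ∈ L → BFactor.orf s ∈ L → i ∉ s) ∧
  (∀ s₁ s₂ : Finset (Fin k),
      BFactor.orf s₁ ∈ L → BFactor.orf s₂ ∈ L → s₁ ≠ s₂ → ¬ s₁ ⊆ s₂) ∧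
  (∀ s : Finset (Fin k), BFactor.orf s ∈ L → 2 ≤ s.card)

/-- If two or-distinctive factor lists define the same nonempty relation, then
every `Δ_c` factor of the first also appears in the second. -/
theorem stmt15 (k : ℕ) (L₁ L₂ : Finset (BFactor k))
    (hd₁ : OrDistinctive L₁) (hd₂ : OrDistinctive L₂)
    (hsame : ∀ x, holdsList L₁ x ↔ holdsList L₂ x)
    (hne : ∃ x, holdsList L₁ x) :
    ∀ (c : Bool) (i : Fin k),
      BFactor.delta c i ∈ L₁ → BFactor.delta c i ∈ L₂ := by
  classical
  intro c i h₁
  by_contra h₂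
  obtain ⟨x, hx₁⟩ := hne
  have hx₂ : holdsList L₂ x := (hsame x).mp hx₁
  have hxi : x i = c := hx₁ _ h₁
  -- no delta on i in L₂
  have hnod : ∀ c', BFactor.delta c' i ∉ L₂ := by
    intro c' hc'
    have : x i = c' := hx₂ _ hc'
    rw [hxi] at this
    exact h₂ (this ▸ hc')
  set P : Fin k → Prop := fun j => j ≠ i ∧ ∃ s, BFactor.orf s ∈ L₂ ∧ i ∈ s ∧ j ∈ s with hP
  set y : Fin k → Bool := fun j => if j = i then !c else if P j then true else x j with hy
  have hyi : y i = !c := by simp [hy]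
  have hy₂ : holdsList L₂ y := by
    intro p hp
    cases p with
    | delta c' m =>
      have hmi : m ≠ i := fun h => hnod c' (h ▸ hp)
      have hnP : ¬ P m := by
        rintro ⟨-, s, hs, -, hms⟩
        exact hd₂.1 c' m s hp hs hms
      have : y m = x m := by simp [hy, hmi, hnP]
      show y m = c'
      rw [this]; exact hx₂ _ hp
    | orf s =>
      show ∃ j ∈ s, y j = true
      by_cases his : i ∈ s
      · obtain ⟨j, hjs, hji⟩ := Finset.exists_mem_ne
          (lt_of_lt_of_le one_lt_two (hd₂.2.2 s hp)) i
        refine ⟨j, hjs, ?_⟩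
        have hPj : P j := ⟨hji, s, hp, his, hjs⟩
        simp only [hy, if_neg hji, if_pos hPj]
      · obtain ⟨j, hjs, hjx⟩ := hx₂ _ hp
        have hji : j ≠ i := fun h => his (h ▸ hjs)
        refine ⟨j, hjs, ?_⟩
        simp only [hy]
        rw [if_neg hji]
        by_cases hPj : P j <;> simp [hPj, hjx]
  have hy₁ : holdsList L₁ y := (hsame y).mpr hy₂
  have : y i = c := hy₁ _ h₁
  rw [hyi] at this
  exact (Bool.not_ne_self c) this
end
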